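/- Under the Dubrovin-equations setup, assume in addition that λ_k(t) ∈ (b_{2k−1}, b_{2k}) for every k = 1, …, n and every t ∈ I, and that each w_k : I → ℝ is continuous. Then for every k and every t ∈ I the sign of λ̇_k(t) equals (−1)^{n−k+1} times the sign of w_k(t); consequently each w_k has constant sign on I and each λ̇_k has constant sign on I, i.e. the direction of motion of each divisor point λ_k in its gap is constant. -/

import Mathlib

open Finset

/-!
In the gaps the points `λ₁ < ⋯ < λₙ` are ordered and positive, so in
`λₖ ∏_{j ≠ k} (λₖ - λⱼ)` exactly the `n - k` factors with `j > k` are negative. The Dubrovin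
equation therefore fixes the sign of `λ̇ₖ` relative to that of `wₖ`, and `wₖ`, being continuous
and nonvanishing on an interval, has constant sign.
-/

theorem Real.sign_mul (x y : ℝ) : Real.sign (x * y) = Real.sign x * Real.sign y := by
  rcases lt_trichotomy x 0 with hx | rfl | hx <;> rcases lt_trichotomy y 0 with hy | rfl | hy <;>
    simp [Real.sign_of_neg, Real.sign_of_pos, mul_pos_of_neg_of_neg, mul_neg_of_pos_of_neg,
      mul_neg_of_neg_of_pos, *]

theorem Real.sign_prod {ι : Type*} (s : Finset ι) (f : ι → ℝ) :
    Real.sign (∏ i ∈ s, f i) = ∏ i ∈ s, Real.sign (f i) :=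
  map_prod ({ toFun := Real.sign, map_one' := Real.sign_one, map_mul' := Real.sign_mul } : ℝ →* ℝ)
    f s

theorem IsPreconnected.real_sign_eq {α : Type*} [TopologicalSpace α] {s : Set α} {f : α → ℝ}
    (hs : IsPreconnected s) (hf : ContinuousOn f s) (hf0 : ∀ x ∈ s, f x ≠ 0) {x y : α}
    (hx : x ∈ s) (hy : y ∈ s) : Real.sign (f x) = Real.sign (f y) := by
  rcases hs.mapsTo_Ioi_or_Iio hf hf0 with hpos | hneg
  · rw [Real.sign_of_pos (hpos hx), Real.sign_of_pos (hpos hy)]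
  · rw [Real.sign_of_neg (hneg hx), Real.sign_of_neg (hneg hy)]

theorem Fin.real_sign_prod_erase_sub_of_strictMono {n : ℕ} {x : Fin n → ℝ} (hx : StrictMono x)
    (k : Fin n) : Real.sign (∏ j ∈ univ.erase k, (x k - x j)) = (-1) ^ (n - (k + 1)) := by
  have hsplit : univ.erase k = Iio k ∪ Ioi k := by
    ext j
    simp only [mem_erase, mem_univ, and_true, mem_union, mem_Iio, mem_Ioi]
    exact ne_iff_lt_or_gt
  have hbefore : ∏ j ∈ Iio k, Real.sign (x k - x j) = 1 :=
    prod_eq_one fun j hj => Real.sign_of_pos (sub_pos.mpr (hx (mem_Iio.mp hj)))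
  have hafter : ∏ j ∈ Ioi k, Real.sign (x k - x j) = (-1) ^ (n - (k + 1)) := by
    rw [prod_congr rfl fun j hj => Real.sign_of_neg (sub_neg.mpr (hx (mem_Ioi.mp hj))),
      Finset.prod_const, Fin.card_Ioi, Nat.sub_sub, Nat.add_comm 1]
  rw [Real.sign_prod, hsplit, prod_union (disjoint_left.mpr fun j hj hj' =>
    (mem_Iio.mp hj).asymm (mem_Ioi.mp hj')), hbefore, hafter, one_mul]

section Gaps

variable {n : ℕ}

/-- With `0`-based indices the `k`-th gap is `(b (2k+1), b (2k+2))`. -/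
def MemGaps (b : Fin (2 * n + 1) → ℝ) (x : Fin n → ℝ) : Prop :=
  ∀ k : Fin n, x k ∈ Set.Ioo (b ⟨2 * (k : ℕ) + 1, by lia⟩) (b ⟨2 * (k : ℕ) + 2, by lia⟩)

variable {b : Fin (2 * n + 1) → ℝ} {x : Fin n → ℝ}

theorem strictMono_of_mem_gaps (hb : StrictMono b) (hx : MemGaps b x) : StrictMono x :=
  fun i j hij =>
  calc x i < b ⟨2 * (i : ℕ) + 2, by lia⟩ := (hx i).2
      _ ≤ b ⟨2 * (j : ℕ) + 1, by lia⟩ := hb.monotone (Fin.mk_le_mk.mpr (by omega))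
      _ < x j := (hx j).1

theorem pos_of_mem_gaps (hb0 : b 0 = 0) (hb : StrictMono b) (hx : MemGaps b x) (k : Fin n) :
    0 < x k :=
  calc 0 = b 0 := hb0.symm
    _ < b ⟨2 * (k : ℕ) + 1, by lia⟩ := hb (Fin.lt_def.mpr (by simp))
    _ < x k := (hx k).1

theorem sign_dubrovin_velocity_of_mem_gaps (hb0 : b 0 = 0) (hb : StrictMono b)
    (hx : MemGaps b x) (k : Fin n) (v : ℝ) :
    Real.sign (-2 * v / (x k * ∏ j ∈ univ.erase k, (x k - x j))) =
      (-1) ^ (n - ((k : ℕ) + 1) + 1) * Real.sign v := by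
  rw [div_eq_mul_inv, Real.sign_mul, Real.sign_inv, Real.sign_mul, Real.sign_mul,
    Real.sign_of_neg (by norm_num : (-2 : ℝ) < 0), Real.sign_of_pos (pos_of_mem_gaps hb0 hb hx k),
    Fin.real_sign_prod_erase_sub_of_strictMono (strictMono_of_mem_gaps hb hx), pow_succ]
  ring

end Gaps

theorem dubrovin_constant_direction (n : ℕ)
    (b : Fin (2 * n + 1) → ℝ) (hb0 : b 0 = 0) (hb : StrictMono b)
    (p q : ℝ) (lam lamdot : Fin n → ℝ → ℝ) (w : Fin n → ℝ → ℝ)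
    (hw_ne : ∀ t ∈ Set.Ioo p q, ∀ k : Fin n, w k t ≠ 0)
    (hdubrovin : ∀ t ∈ Set.Ioo p q, ∀ k : Fin n,
      lamdot k t = -2 * w k t / (lam k t * ∏ j ∈ univ.erase k, (lam k t - lam j t)))
    (hgap : ∀ t ∈ Set.Ioo p q, ∀ k : Fin n,
      lam k t ∈ Set.Ioo (b ⟨2 * (k : ℕ) + 1, by omega⟩) (b ⟨2 * (k : ℕ) + 2, by omega⟩))
    (hw_cont : ∀ k : Fin n, ContinuousOn (w k) (Set.Ioo p q)) :
    (∀ k : Fin n, ∀ t ∈ Set.Ioo p q,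
      Real.sign (lamdot k t) =
        (-1 : ℝ) ^ (n - ((k : ℕ) + 1) + 1) * Real.sign (w k t)) ∧
    (∀ k : Fin n, ∀ t ∈ Set.Ioo p q, ∀ s ∈ Set.Ioo p q,
      Real.sign (w k t) = Real.sign (w k s)) ∧
    (∀ k : Fin n, ∀ t ∈ Set.Ioo p q, ∀ s ∈ Set.Ioo p q,
      Real.sign (lamdot k t) = Real.sign (lamdot k s)) := by
  have hdir : ∀ k : Fin n, ∀ t ∈ Set.Ioo p q,
      Real.sign (lamdot k t) = (-1 : ℝ) ^ (n - ((k : ℕ) + 1) + 1) * Real.sign (w k t) :=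
    fun k t ht => by
      rw [hdubrovin t ht k]
      exact sign_dubrovin_velocity_of_mem_gaps hb0 hb (hgap t ht) k (w k t)
  have hw_sign : ∀ k : Fin n, ∀ t ∈ Set.Ioo p q, ∀ s ∈ Set.Ioo p q,
      Real.sign (w k t) = Real.sign (w k s) := fun k t ht s hs =>
    isPreconnected_Ioo.real_sign_eq (hw_cont k) (fun t ht => hw_ne t ht k) ht hs
  refine ⟨hdir, hw_sign, fun k t ht s hs => ?_⟩
  rw [hdir k t ht, hdir k s hs, hw_sign k t ht s hs]
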